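/- Let F be a field and let f, g : A → B be two different morphisms in tilde{GrAlg_F} (respectively, in tilde{GrAlg¹_F}). If the grading on the algebra B is trivial, then the coequalizer of f and g does not exist. -/

import Mathlib

set_option autoImplicit false

universe u

/-- A group grading on a (not necessarily unital) associative algebra over `F`:
an object of the category `GrAlg_F`. -/
structure GrAlg (F : Type u) [Field F] : Type (u + 1) where
  A : Type u
  [ringA : NonUnitalRing A]
  [modA : Module F A]
  [sccA : SMulCommClass F A A]
  [istA : IsScalarTower F A A]
  G : Type u
  [grpG : Group G]
  comp : G → Submodule F A
  mul_mem : ∀ ⦃g h : G⦄ ⦃a b : A⦄, a ∈ comp g → b ∈ comp h → a * b ∈ comp (g * h)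
  independent : iSupIndep comp
  spans : (⨆ g, comp g) = ⊤

attribute [instance] GrAlg.ringA GrAlg.modA GrAlg.sccA GrAlg.istA GrAlg.grpG

variable {F : Type u} [Field F]

/-- The grading is trivial if all components other than the identity component vanish. -/
def GrAlg.IsTrivialGrading (X : GrAlg F) : Prop := ∀ g : X.G, g ≠ 1 → X.comp g = ⊥

/-- The support of a grading. -/
def GrAlg.supp (X : GrAlg F) : Set X.G := {g | X.comp g ≠ ⊥}

/-- A morphism in `GrAlg_F`: an algebra homomorphism mapping each graded component
into some graded component. -/
@[ext]
structure GrAlgHom (X Y : GrAlg F) where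
  hom : X.A →ₙₐ[F] Y.A
  graded : ∀ g : X.G, ∃ h : Y.G, ∀ a ∈ X.comp g, hom a ∈ Y.comp h

def GrAlgHom.id (X : GrAlg F) : GrAlgHom X X where
  hom := NonUnitalAlgHom.id F X.A
  graded g := ⟨g, fun a ha => ha⟩

def GrAlgHom.comp {X Y Z : GrAlg F} (g : GrAlgHom Y Z) (f : GrAlgHom X Y) :
    GrAlgHom X Z where
  hom := g.hom.comp f.hom
  graded s := by
    obtain ⟨h, hh⟩ := f.graded s
    obtain ⟨k, hk⟩ := g.graded h
    exact ⟨k, fun a ha => by simpa using hk _ (hh a ha)⟩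

/-- An object of `GrAlg¹_F`: a group grading on a unital associative algebra. -/
structure GrAlgOne (F : Type u) [Field F] extends GrAlg F : Type (u + 1) where
  one : A
  one_mul : ∀ a : A, one * a = a
  mul_one : ∀ a : A, a * one = a

/-- A morphism in `GrAlg¹_F`: a unital graded algebra homomorphism. -/
@[ext]
structure GrAlgOneHom (X Y : GrAlgOne F) extends GrAlgHom X.toGrAlg Y.toGrAlg where
  map_one : toGrAlgHom.hom X.one = Y.one

def GrAlgOneHom.id (X : GrAlgOne F) : GrAlgOneHom X X where
  toGrAlgHom := GrAlgHom.id X.toGrAlg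
  map_one := rfl

def GrAlgOneHom.comp {X Y Z : GrAlgOne F} (g : GrAlgOneHom Y Z) (f : GrAlgOneHom X Y) :
    GrAlgOneHom X Z where
  toGrAlgHom := g.toGrAlgHom.comp f.toGrAlgHom
  map_one := by
    show (g.toGrAlgHom.hom.comp f.toGrAlgHom.hom) X.one = Z.one
    simp [f.map_one, g.map_one]

/-- A morphism in `tilde{GrAlg_F}`: a graded injective homomorphism. -/
@[ext]
structure TGrAlgHom (X Y : GrAlg F) extends GrAlgHom X Y where
  injOn : ∀ g : X.G, Set.InjOn toGrAlgHom.hom (X.comp g)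

def TGrAlgHom.id (X : GrAlg F) : TGrAlgHom X X where
  toGrAlgHom := GrAlgHom.id X
  injOn g := fun a _ b _ hab => hab

def TGrAlgHom.comp {X Y Z : GrAlg F} (g : TGrAlgHom Y Z) (f : TGrAlgHom X Y) :
    TGrAlgHom X Z where
  toGrAlgHom := g.toGrAlgHom.comp f.toGrAlgHom
  injOn s := by
    intro a ha b hb hab
    obtain ⟨h, hh⟩ := f.graded s
    exact f.injOn s ha hb (g.injOn h (hh a ha) (hh b hb) (by simpa [GrAlgHom.comp] using hab))

/-- A morphism in `tilde{GrAlg¹_F}`: a unital graded injective homomorphism. -/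
@[ext]
structure TGrAlgOneHom (X Y : GrAlgOne F) extends TGrAlgHom X.toGrAlg Y.toGrAlg where
  map_one : toGrAlgHom.hom X.one = Y.one

def TGrAlgOneHom.id (X : GrAlgOne F) : TGrAlgOneHom X X where
  toTGrAlgHom := TGrAlgHom.id X.toGrAlg
  map_one := rfl

def TGrAlgOneHom.comp {X Y Z : GrAlgOne F} (g : TGrAlgOneHom Y Z) (f : TGrAlgOneHom X Y) :
    TGrAlgOneHom X Z where
  toTGrAlgHom := g.toTGrAlgHom.comp f.toTGrAlgHom
  map_one := by
    show (g.toGrAlgHom.hom.comp f.toGrAlgHom.hom) X.one = Z.one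
    simp [f.map_one, g.map_one]
section Statement

variable (F)

/-- `h : B → C` is a coequalizer of `f, g : A → B` in `tilde{GrAlg_F}`. -/
def IsCoequalizerTGrAlg {A B C : GrAlg F} (f g : TGrAlgHom A B) (h : TGrAlgHom B C) : Prop :=
  h.comp f = h.comp g ∧
    ∀ (D : GrAlg F) (φ : TGrAlgHom B D), φ.comp f = φ.comp g →
      ∃! ψ : TGrAlgHom C D, ψ.comp h = φ

/-- `h : B → C` is a coequalizer of `f, g : A → B` in `tilde{GrAlg¹_F}`. -/
def IsCoequalizerTGrAlgOne {A B C : GrAlgOne F} (f g : TGrAlgOneHom A B)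
    (h : TGrAlgOneHom B C) : Prop :=
  h.comp f = h.comp g ∧
    ∀ (D : GrAlgOne F) (φ : TGrAlgOneHom B D), φ.comp f = φ.comp g →
      ∃! ψ : TGrAlgOneHom C D, ψ.comp h = φ

section Monomorphisms

variable {F}

lemma GrAlg.comp_one_eq_top_of_isTrivialGrading (X : GrAlg F) (hX : X.IsTrivialGrading) :
    X.comp 1 = ⊤ := by
  refine eq_top_iff.2 (X.spans ▸ iSup_le fun g => ?_)
  by_cases hg : g = 1
  · exact hg ▸ le_rfl
  · exact (hX g hg).le.trans bot_le

lemma TGrAlgHom.injective_of_isTrivialGrading {X Y : GrAlg F} (h : TGrAlgHom X Y)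
    (hX : X.IsTrivialGrading) : Function.Injective h.hom := by
  have hinj := h.injOn 1
  rw [X.comp_one_eq_top_of_isTrivialGrading hX] at hinj
  exact fun a b hab => hinj trivial trivial hab

lemma TGrAlgHom.cancel_left {X Y Z : GrAlg F} (h : TGrAlgHom Y Z) {f g : TGrAlgHom X Y}
    (hh : Function.Injective h.hom) (hfg : h.comp f = h.comp g) : f = g :=
  TGrAlgHom.ext <| NonUnitalAlgHom.ext fun a =>
    hh (congrArg (fun k : TGrAlgHom X Z => k.hom a) hfg)

lemma TGrAlgOneHom.cancel_left {X Y Z : GrAlgOne F} (h : TGrAlgOneHom Y Z)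
    {f g : TGrAlgOneHom X Y} (hh : Function.Injective h.hom) (hfg : h.comp f = h.comp g) :
    f = g :=
  TGrAlgOneHom.ext <| congrArg (·.hom) <|
    h.toTGrAlgHom.cancel_left hh (congrArg TGrAlgOneHom.toTGrAlgHom hfg)

end Monomorphisms

/-- If `f ≠ g` are morphisms in `tilde{GrAlg_F}` (resp. `tilde{GrAlg¹_F}`) and the grading
on `B` is trivial, then the coequalizer of `f` and `g` does not exist. -/
theorem no_coequalizer_into_trivially_graded (F : Type u) [Field F] :
    (∀ (A B : GrAlg F) (f g : TGrAlgHom A B), f ≠ g → B.IsTrivialGrading →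
      ¬ ∃ (C : GrAlg F) (h : TGrAlgHom B C), IsCoequalizerTGrAlg F f g h)
    ∧
    (∀ (A B : GrAlgOne F) (f g : TGrAlgOneHom A B), f ≠ g → B.toGrAlg.IsTrivialGrading →
      ¬ ∃ (C : GrAlgOne F) (h : TGrAlgOneHom B C), IsCoequalizerTGrAlgOne F f g h) := by
  constructor
  · rintro A B f g hfg hB ⟨C, h, hcomp, -⟩
    exact hfg (h.cancel_left (h.injective_of_isTrivialGrading hB) hcomp)
  · rintro A B f g hfg hB ⟨C, h, hcomp, -⟩
    exact hfg (h.cancel_left (h.toTGrAlgHom.injective_of_isTrivialGrading hB) hcomp)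

end Statement
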